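/- Fix a unit vector ψ in a Hilbert space H. For each abelian von Neumann subalgebra V, define T^ψ_V := {α ∈ P(V) | ⟨ψ, α ψ⟩ = 1}. Then the family (T^ψ_V)_V is a sub-presheaf of the outer presheaf: if V' ⊆ V and α ∈ T^ψ_V, then δ_{V'}(α) ∈ T^ψ_{V'}. -/

import Mathlib

/-!
For a projection `p`, `‖x - p x‖² = ‖x‖² - ⟪x, p x⟫`, so `⟪ψ, αψ⟫ = 1 = ‖ψ‖²` forces `αψ = ψ`.
Then `δ α = α` gives `δψ = δ(αψ) = αψ = ψ`, hence `⟪ψ, δψ⟫ = ‖ψ‖² = 1`.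
-/

open scoped InnerProductSpace

/-- An operator is a projection if it is a self-adjoint idempotent. -/
def IsProjOp {H : Type*} [NormedAddCommGroup H] [InnerProductSpace ℂ H]
    [CompleteSpace H] (p : H →L[ℂ] H) : Prop :=
  p * p = p ∧ star p = p

/-- The order `p ≤ q` on projections: `p * q = p = q * p`. -/
def ProjLE {H : Type*} [NormedAddCommGroup H] [InnerProductSpace ℂ H]
    (p q : H →L[ℂ] H) : Prop :=
  p * q = p ∧ q * p = p

theorem IsProjOp.isStarProjection {H : Type*} [NormedAddCommGroup H] [InnerProductSpace ℂ H]
    [CompleteSpace H] {p : H →L[ℂ] H} (hp : IsProjOp p) : IsStarProjection p :=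
  ⟨hp.1, hp.2⟩

namespace IsStarProjection

variable {𝕜 E : Type*} [RCLike 𝕜] [NormedAddCommGroup E] [InnerProductSpace 𝕜 E]
  [CompleteSpace E] {p : E →L[𝕜] E}

theorem inner_apply_left (hp : IsStarProjection p) (x y : E) : ⟪p x, y⟫_𝕜 = ⟪x, p y⟫_𝕜 := by
  rw [← ContinuousLinearMap.adjoint_inner_right, ← ContinuousLinearMap.star_eq_adjoint,
    hp.isSelfAdjoint.star_eq]

theorem inner_apply_apply (hp : IsStarProjection p) (x : E) : ⟪p x, p x⟫_𝕜 = ⟪x, p x⟫_𝕜 := by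
  rw [hp.inner_apply_left, ← mul_apply_eq_comp, hp.isIdempotentElem.eq]

theorem inner_sub_apply_self (hp : IsStarProjection p) (x : E) :
    ⟪x - p x, x - p x⟫_𝕜 = ⟪x, x⟫_𝕜 - ⟪x, p x⟫_𝕜 := by
  rw [inner_sub_sub_self, hp.inner_apply_apply, hp.inner_apply_left]
  ring

theorem apply_eq_self_iff (hp : IsStarProjection p) (x : E) :
    p x = x ↔ ⟪x, p x⟫_𝕜 = ⟪x, x⟫_𝕜 := by
  rw [eq_comm, ← sub_eq_zero, ← inner_self_eq_zero (𝕜 := 𝕜), hp.inner_sub_apply_self, sub_eq_zero,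
    eq_comm]

end IsStarProjection

theorem stmt_16_general {H : Type*} [NormedAddCommGroup H] [InnerProductSpace ℂ H]
    [CompleteSpace H] (ψ : H) (hψ : ‖ψ‖ = 1)
    (V' : StarSubalgebra ℂ (H →L[ℂ] H))
    (α : H →L[ℂ] H) (hαproj : IsProjOp α)
    (hα : ⟪ψ, α ψ⟫_ℂ = 1)
    (δ : H →L[ℂ] H) (hδV' : δ ∈ V') (hδproj : IsProjOp δ)
    (hαδ : ProjLE α δ) :
    δ ∈ V' ∧ IsProjOp δ ∧ ⟪ψ, δ ψ⟫_ℂ = 1 := by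
  have hψψ : ⟪ψ, ψ⟫_ℂ = 1 := by
    rw [inner_self_eq_norm_sq_to_K, hψ]
    norm_num
  have hαψ : α ψ = ψ := (hαproj.isStarProjection.apply_eq_self_iff ψ).2 (hα.trans hψψ.symm)
  have hδψ : δ ψ = ψ := by rw [← hαψ, ← mul_apply_eq_comp, hαδ.2]
  exact ⟨hδV', hδproj, by rw [hδψ, hψψ]⟩

/-- The family `T^ψ_V = {α ∈ P(V) | ⟨ψ, αψ⟩ = 1}` is a sub-presheaf of the outer
presheaf: if `V' ⊆ V` and `α ∈ T^ψ_V`, then `δ_{V'}(α) ∈ T^ψ_{V'}`. -/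
theorem stmt_16 {H : Type*} [NormedAddCommGroup H] [InnerProductSpace ℂ H]
    [CompleteSpace H] (ψ : H) (hψ : ‖ψ‖ = 1)
    (V V' : StarSubalgebra ℂ (H →L[ℂ] H)) (hVV' : V' ≤ V)
    (hVcomm : ∀ a ∈ V, ∀ b ∈ V, a * b = b * a)
    (α : H →L[ℂ] H) (hαV : α ∈ V) (hαproj : IsProjOp α)
    (hα : ⟪ψ, α ψ⟫_ℂ = 1)
    (δ : H →L[ℂ] H) (hδV' : δ ∈ V') (hδproj : IsProjOp δ)
    (hαδ : ProjLE α δ)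
    (hleast : ∀ q ∈ V', IsProjOp q → ProjLE α q → ProjLE δ q) :
    δ ∈ V' ∧ IsProjOp δ ∧ ⟪ψ, δ ψ⟫_ℂ = 1 :=
  stmt_16_general ψ hψ V' α hαproj hα δ hδV' hδproj hαδ
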